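/- Assume conditions (α) and (β) hold and that S*(A,H,C,G_y) ⊆ V*(A,B,E,D_z). Then ⟨A | im B + im H⟩ = ⟨A | im B⟩ + V_m, i.e. the smallest A-invariant subspace containing im B + im H equals the sum of the smallest A-invariant subspace containing im B and V_m. -/

import Mathlib

noncomputable section

open Matrix Submodule

section GeneralDefs

variable {X U Y : Type*} [AddCommGroup X] [Module ℝ X] [AddCommGroup U] [Module ℝ U]
  [AddCommGroup Y] [Module ℝ Y]

/-- `V` is an `(A,B,C,D)`-output nulling subspace. -/
def IsOutputNulling (A : X →ₗ[ℝ] X) (B : U →ₗ[ℝ] X) (C : X →ₗ[ℝ] Y) (D : U →ₗ[ℝ] Y)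
    (V : Submodule ℝ X) : Prop :=
  ∀ v ∈ V, ∃ u : U, A v + B u ∈ V ∧ C v + D u = 0

/-- `S` is an `(A,B,C,D)`-input containing subspace. -/
def IsInputContaining (A : X →ₗ[ℝ] X) (B : U →ₗ[ℝ] X) (C : X →ₗ[ℝ] Y) (D : U →ₗ[ℝ] Y)
    (S : Submodule ℝ X) : Prop :=
  ∀ x ∈ S, ∀ u : U, C x + D u = 0 → A x + B u ∈ S

/-- `Vstar` is the largest `(A,B,C,D)`-output nulling subspace, i.e. `V*(A,B,C,D)`. -/
def IsMaxOutputNulling (A : X →ₗ[ℝ] X) (B : U →ₗ[ℝ] X) (C : X →ₗ[ℝ] Y) (D : U →ₗ[ℝ] Y)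
    (Vstar : Submodule ℝ X) : Prop :=
  IsOutputNulling A B C D Vstar ∧ ∀ V, IsOutputNulling A B C D V → V ≤ Vstar

/-- `Sstar` is the smallest `(A,B,C,D)`-input containing subspace, i.e. `S*(A,B,C,D)`. -/
def IsMinInputContaining (A : X →ₗ[ℝ] X) (B : U →ₗ[ℝ] X) (C : X →ₗ[ℝ] Y) (D : U →ₗ[ℝ] Y)
    (Sstar : Submodule ℝ X) : Prop :=
  IsInputContaining A B C D Sstar ∧ ∀ S, IsInputContaining A B C D S → Sstar ≤ S

/-- `V` is `(A,B,C,D)`-self bounded, where `Vstar` is the largest output nulling subspace: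
`V` is output nulling and `V ⊇ V* ∩ B(ker D)`. -/
def IsSelfBounded (A : X →ₗ[ℝ] X) (B : U →ₗ[ℝ] X) (C : X →ₗ[ℝ] Y) (D : U →ₗ[ℝ] Y)
    (Vstar V : Submodule ℝ X) : Prop :=
  IsOutputNulling A B C D V ∧ Vstar ⊓ (LinearMap.ker D).map B ≤ V

/-- `S` is `(A,B,C,D)`-self hidden, where `Sstar` is the smallest input containing subspace:
`S` is input containing and `S ⊆ S* + C⁻¹(im D)`. -/
def IsSelfHidden (A : X →ₗ[ℝ] X) (B : U →ₗ[ℝ] X) (C : X →ₗ[ℝ] Y) (D : U →ₗ[ℝ] Y)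
    (Sstar S : Submodule ℝ X) : Prop :=
  IsInputContaining A B C D S ∧ S ≤ Sstar ⊔ (LinearMap.range D).comap C

/-- `Vm` is the smallest `(A,B,C,D)`-self bounded subspace. -/
def IsMinSelfBounded (A : X →ₗ[ℝ] X) (B : U →ₗ[ℝ] X) (C : X →ₗ[ℝ] Y) (D : U →ₗ[ℝ] Y)
    (Vstar Vm : Submodule ℝ X) : Prop :=
  IsSelfBounded A B C D Vstar Vm ∧ ∀ V, IsSelfBounded A B C D Vstar V → Vm ≤ V

/-- `SM` is the largest `(A,B,C,D)`-self hidden subspace. -/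
def IsMaxSelfHidden (A : X →ₗ[ℝ] X) (B : U →ₗ[ℝ] X) (C : X →ₗ[ℝ] Y) (D : U →ₗ[ℝ] Y)
    (Sstar SM : Submodule ℝ X) : Prop :=
  IsSelfHidden A B C D Sstar SM ∧ ∀ S, IsSelfHidden A B C D Sstar S → S ≤ SM

end GeneralDefs

section MatrixDefs

variable {n m q p r s : ℕ}

/-- `⟨M|U⟩` : the smallest `M`-invariant subspace containing `U`. -/
def invHull (M : Matrix (Fin n) (Fin n) ℝ) (U : Submodule ℝ (Fin n → ℝ)) :
    Submodule ℝ (Fin n → ℝ) :=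
  sInf {W | U ≤ W ∧ ∀ x ∈ W, M.mulVec x ∈ W}

/-- `⟨U|M⟩` : the largest `M`-invariant subspace contained in `U`. -/
def invCore (M : Matrix (Fin n) (Fin n) ℝ) (U : Submodule ℝ (Fin n → ℝ)) :
    Submodule ℝ (Fin n → ℝ) :=
  sSup {W | W ≤ U ∧ ∀ x ∈ W, M.mulVec x ∈ W}

open scoped Classical in
/-- `σ(M | J₂/J₁)`: the multiset of complex roots (with multiplicity) of the characteristic
polynomial of the map induced by `M` on the quotient `J₂ ⧸ J₁`, for `M`-invariant `J₁ ≤ J₂`. -/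
def quotSpec (M : Matrix (Fin n) (Fin n) ℝ)
    (J₁ J₂ : Submodule ℝ (Fin n → ℝ)) : Multiset ℂ :=
  if h : J₁ ≤ J₂ ∧ (∀ x ∈ J₁, M.mulVec x ∈ J₁) ∧ (∀ x ∈ J₂, M.mulVec x ∈ J₂) then
    (((Submodule.mapQ (J₁.comap J₂.subtype) (J₁.comap J₂.subtype)
        (M.mulVecLin.restrict (p := J₂) (q := J₂) (fun x hx => h.2.2 x hx))
        (fun x hx => h.2.1 x.1 hx)).charpoly).map (algebraMap ℝ ℂ)).roots
  else 0

/-- `σ(M)`: the multiset of complex roots (with multiplicity) of the characteristic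
polynomial of the square matrix `M`. -/
def specMat {ι : Type*} [Fintype ι] [DecidableEq ι] (M : Matrix ι ι ℝ) : Multiset ℂ :=
  ((M.charpoly).map (algebraMap ℝ ℂ)).roots

/-- Condition (α). -/
def CondAlpha (B : Matrix (Fin n) (Fin m) ℝ) (H : Matrix (Fin n) (Fin q) ℝ)
    (Dz : Matrix (Fin r) (Fin m) ℝ) (Gz : Matrix (Fin r) (Fin q) ℝ)
    (V : Submodule ℝ (Fin n → ℝ)) : Prop :=
  ∀ w : Fin q → ℝ, ∃ u : Fin m → ℝ,
    H.mulVec w + B.mulVec u ∈ V ∧ Gz.mulVec w + Dz.mulVec u = 0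

/-- Condition (β). -/
def CondBeta (C : Matrix (Fin p) (Fin n) ℝ) (Gy : Matrix (Fin p) (Fin q) ℝ)
    (E : Matrix (Fin r) (Fin n) ℝ) (Gz : Matrix (Fin r) (Fin q) ℝ)
    (S : Submodule ℝ (Fin n → ℝ)) : Prop :=
  ∀ x ∈ S, ∀ w : Fin q → ℝ, C.mulVec x + Gy.mulVec w = 0 → E.mulVec x + Gz.mulVec w = 0

/-- `(S,V;K)` is a solution triple of DDPDOF. -/
def IsSolutionTriple (A : Matrix (Fin n) (Fin n) ℝ) (B : Matrix (Fin n) (Fin m) ℝ)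
    (H : Matrix (Fin n) (Fin q) ℝ) (C : Matrix (Fin p) (Fin n) ℝ)
    (Dy : Matrix (Fin p) (Fin m) ℝ) (Gy : Matrix (Fin p) (Fin q) ℝ)
    (E : Matrix (Fin r) (Fin n) ℝ) (Dz : Matrix (Fin r) (Fin m) ℝ)
    (Gz : Matrix (Fin r) (Fin q) ℝ)
    (S V : Submodule ℝ (Fin n → ℝ)) (K : Matrix (Fin m) (Fin p) ℝ) : Prop :=
  IsInputContaining A.mulVecLin H.mulVecLin C.mulVecLin Gy.mulVecLin S ∧
  IsOutputNulling A.mulVecLin B.mulVecLin E.mulVecLin Dz.mulVecLin V ∧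
  CondAlpha B H Dz Gz V ∧
  CondBeta C Gy E Gz S ∧
  S ≤ V ∧
  IsUnit (1 + K * Dy) ∧
  ∀ x ∈ S, ∀ w : Fin q → ℝ,
    (A + B * K * C).mulVec x + (H + B * K * Gy).mulVec w ∈ V ∧
    (E + Dz * K * C).mulVec x + (Gz + Dz * K * Gy).mulVec w = 0

/-- `F` is an `(A,B,E,Dz)`-output nulling friend of `V`. -/
def IsONFriend (A : Matrix (Fin n) (Fin n) ℝ) (B : Matrix (Fin n) (Fin m) ℝ)
    (E : Matrix (Fin r) (Fin n) ℝ) (Dz : Matrix (Fin r) (Fin m) ℝ)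
    (V : Submodule ℝ (Fin n → ℝ)) (F : Matrix (Fin m) (Fin n) ℝ) : Prop :=
  (∀ v ∈ V, (A + B * F).mulVec v ∈ V) ∧ ∀ v ∈ V, (E + Dz * F).mulVec v = 0

/-- `G` is an `(A,H,C,Gy)`-input containing friend of `S`. -/
def IsICFriend (A : Matrix (Fin n) (Fin n) ℝ) (H : Matrix (Fin n) (Fin q) ℝ)
    (C : Matrix (Fin p) (Fin n) ℝ) (Gy : Matrix (Fin p) (Fin q) ℝ)
    (S : Submodule ℝ (Fin n → ℝ)) (G : Matrix (Fin n) (Fin p) ℝ) : Prop :=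
  (∀ x ∈ S, (A + G * C).mulVec x ∈ S) ∧ LinearMap.range (H + G * Gy).mulVecLin ≤ S

/-- `σfix(V;F)`. -/
def sigmaFixV (A : Matrix (Fin n) (Fin n) ℝ) (B : Matrix (Fin n) (Fin m) ℝ)
    (Dz : Matrix (Fin r) (Fin m) ℝ) (V : Submodule ℝ (Fin n → ℝ))
    (F : Matrix (Fin m) (Fin n) ℝ) : Multiset ℂ :=
  quotSpec (A + B * F) (V ⊔ invHull A (LinearMap.range B.mulVecLin)) ⊤ +
  quotSpec (A + B * F)
    (invHull (A + B * F) (V ⊓ (LinearMap.ker Dz.mulVecLin).map B.mulVecLin)) V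

/-- `σfix(S;G)`. -/
def sigmaFixS (A : Matrix (Fin n) (Fin n) ℝ) (C : Matrix (Fin p) (Fin n) ℝ)
    (Gy : Matrix (Fin p) (Fin q) ℝ) (S : Submodule ℝ (Fin n → ℝ))
    (G : Matrix (Fin n) (Fin p) ℝ) : Multiset ℂ :=
  quotSpec (A + G * C) S
    (invCore (A + G * C) (S ⊔ (LinearMap.range Gy.mulVecLin).comap C.mulVecLin)) +
  quotSpec (A + G * C) ⊥ (S ⊓ invCore A (LinearMap.ker C.mulVecLin))

/-- `σfix(S,V;G,F) = σfix(V;F) ⊎ σfix(S;G)`. -/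
def sigmaFix (A : Matrix (Fin n) (Fin n) ℝ) (B : Matrix (Fin n) (Fin m) ℝ)
    (C : Matrix (Fin p) (Fin n) ℝ) (Gy : Matrix (Fin p) (Fin q) ℝ)
    (Dz : Matrix (Fin r) (Fin m) ℝ) (S V : Submodule ℝ (Fin n → ℝ))
    (G : Matrix (Fin n) (Fin p) ℝ) (F : Matrix (Fin m) (Fin n) ℝ) : Multiset ℂ :=
  sigmaFixV A B Dz V F + sigmaFixS A C Gy S G

/-- `W = (I - Dy·Dc)⁻¹`. -/
def clW (Dy : Matrix (Fin p) (Fin m) ℝ) (Dc : Matrix (Fin m) (Fin p) ℝ) :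
    Matrix (Fin p) (Fin p) ℝ := (1 - Dy * Dc)⁻¹

/-- The closed-loop matrix `Â`. -/
def clA (A : Matrix (Fin n) (Fin n) ℝ) (B : Matrix (Fin n) (Fin m) ℝ)
    (C : Matrix (Fin p) (Fin n) ℝ) (Dy : Matrix (Fin p) (Fin m) ℝ)
    (Ac : Matrix (Fin s) (Fin s) ℝ) (Bc : Matrix (Fin s) (Fin p) ℝ)
    (Cc : Matrix (Fin m) (Fin s) ℝ) (Dc : Matrix (Fin m) (Fin p) ℝ) :
    Matrix (Fin n ⊕ Fin s) (Fin n ⊕ Fin s) ℝ :=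
  Matrix.fromBlocks (A + B * Dc * clW Dy Dc * C) (B * Cc + B * Dc * clW Dy Dc * Dy * Cc)
    (Bc * clW Dy Dc * C) (Ac + Bc * clW Dy Dc * Dy * Cc)

/-- The closed-loop matrix `Ĥ`. -/
def clH (B : Matrix (Fin n) (Fin m) ℝ) (H : Matrix (Fin n) (Fin q) ℝ)
    (Dy : Matrix (Fin p) (Fin m) ℝ) (Gy : Matrix (Fin p) (Fin q) ℝ)
    (Bc : Matrix (Fin s) (Fin p) ℝ) (Dc : Matrix (Fin m) (Fin p) ℝ) :
    Matrix (Fin n ⊕ Fin s) (Fin q) ℝ :=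
  Matrix.fromRows (H + B * Dc * clW Dy Dc * Gy) (Bc * clW Dy Dc * Gy)

/-- The closed-loop matrix `Ĉ`. -/
def clC (C : Matrix (Fin p) (Fin n) ℝ) (Dy : Matrix (Fin p) (Fin m) ℝ)
    (E : Matrix (Fin r) (Fin n) ℝ) (Dz : Matrix (Fin r) (Fin m) ℝ)
    (Cc : Matrix (Fin m) (Fin s) ℝ) (Dc : Matrix (Fin m) (Fin p) ℝ) :
    Matrix (Fin r) (Fin n ⊕ Fin s) ℝ :=
  Matrix.fromCols (E + Dz * Dc * clW Dy Dc * C) (Dz * Cc + Dz * Dc * clW Dy Dc * Dy * Cc)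

/-- The closed-loop matrix `Ĝ`. -/
def clG (Dy : Matrix (Fin p) (Fin m) ℝ) (Gy : Matrix (Fin p) (Fin q) ℝ)
    (Dz : Matrix (Fin r) (Fin m) ℝ) (Gz : Matrix (Fin r) (Fin q) ℝ)
    (Dc : Matrix (Fin m) (Fin p) ℝ) : Matrix (Fin r) (Fin q) ℝ :=
  Gz + Dz * Dc * clW Dy Dc * Gy

/-- DDPDOF is solvable. -/
def DDPDOFSolvable (A : Matrix (Fin n) (Fin n) ℝ) (B : Matrix (Fin n) (Fin m) ℝ)
    (H : Matrix (Fin n) (Fin q) ℝ) (C : Matrix (Fin p) (Fin n) ℝ)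
    (Dy : Matrix (Fin p) (Fin m) ℝ) (Gy : Matrix (Fin p) (Fin q) ℝ)
    (E : Matrix (Fin r) (Fin n) ℝ) (Dz : Matrix (Fin r) (Fin m) ℝ)
    (Gz : Matrix (Fin r) (Fin q) ℝ) : Prop :=
  ∃ (s : ℕ) (Ac : Matrix (Fin s) (Fin s) ℝ) (Bc : Matrix (Fin s) (Fin p) ℝ)
    (Cc : Matrix (Fin m) (Fin s) ℝ) (Dc : Matrix (Fin m) (Fin p) ℝ),
    IsUnit (1 - Dy * Dc) ∧ clG Dy Gy Dz Gz Dc = 0 ∧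
    ∀ k : ℕ, clC C Dy E Dz Cc Dc * clA A B C Dy Ac Bc Cc Dc ^ k * clH B H Dy Gy Bc Dc = 0

end MatrixDefs

end

/-!
Condition (α), together with `V*(A,B,E,D_z) ⊆ V*₁ := V*(A,[B H],E,[D_z G_z])`, puts every `H w`
into `im B + V_m`: for the `u` given by (α), `H w + B u` lies in `V*₁ ∩ [B H](ker [D_z G_z])`,
which the self bounded subspace `V_m` contains. Since `V_m` is output nulling for the joint
input, `A V_m ⊆ V_m + im B + im H`, so `⟨A | im B⟩ + V_m` is `A`-invariant and contains
`im B + im H`. Conversely, `V_m ∩ ⟨A | im B + im H⟩` is again self bounded, so minimality of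
`V_m` puts it inside the hull.
-/

open Matrix Submodule

section OutputNulling

variable {X U W Y : Type*} [AddCommGroup X] [Module ℝ X] [AddCommGroup U] [Module ℝ U]
  [AddCommGroup W] [Module ℝ W] [AddCommGroup Y] [Module ℝ Y]
  {A : X →ₗ[ℝ] X} {B : U →ₗ[ℝ] X} {C : X →ₗ[ℝ] Y} {D : U →ₗ[ℝ] Y}

theorem IsOutputNulling.coprod {V : Submodule ℝ X} (hV : IsOutputNulling A B C D V)
    (H : W →ₗ[ℝ] X) (G : W →ₗ[ℝ] Y) : IsOutputNulling A (B.coprod H) C (D.coprod G) V := by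
  intro v hv
  obtain ⟨u, hAv, hCv⟩ := hV v hv
  exact ⟨(u, 0), by simpa using hAv, by simpa using hCv⟩

theorem IsOutputNulling.apply_mem_sup {V P : Submodule ℝ X} (hV : IsOutputNulling A B C D V)
    (hP : ∀ x ∈ P, A x ∈ P) (hB : LinearMap.range B ≤ P ⊔ V) {x : X} (hx : x ∈ P ⊔ V) :
    A x ∈ P ⊔ V := by
  obtain ⟨y, hy, z, hz, rfl⟩ := mem_sup.mp hx
  obtain ⟨u, hAz, -⟩ := hV z hz
  have hAz' : A z = (A z + B u) - B u := (add_sub_cancel_right _ _).symm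
  rw [map_add, hAz']
  exact add_mem (mem_sup_left (hP y hy))
    (sub_mem (mem_sup_right hAz) (hB (LinearMap.mem_range_self B u)))

theorem IsSelfBounded.inf {Vstar V P : Submodule ℝ X} (hV : IsSelfBounded A B C D Vstar V)
    (hP : ∀ x ∈ P, A x ∈ P) (hB : LinearMap.range B ≤ P) :
    IsSelfBounded A B C D Vstar (V ⊓ P) := by
  refine ⟨fun v hv => ?_, le_inf hV.2 (inf_le_right.trans (LinearMap.map_le_range.trans hB))⟩
  obtain ⟨u, hAv, hCv⟩ := hV.1 v hv.1
  exact ⟨u, ⟨hAv, add_mem (hP v hv.2) (hB (LinearMap.mem_range_self B u))⟩, hCv⟩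

theorem IsMinSelfBounded.le_of_invariant {Vstar Vm P : Submodule ℝ X}
    (hVm : IsMinSelfBounded A B C D Vstar Vm) (hP : ∀ x ∈ P, A x ∈ P)
    (hB : LinearMap.range B ≤ P) : Vm ≤ P :=
  (hVm.2 _ (hVm.1.inf hP hB)).trans inf_le_right

theorem range_le_sup_of_isSelfBounded_coprod {H : W →ₗ[ℝ] X} {G : W →ₗ[ℝ] Y}
    {Vstar Vstar₁ V : Submodule ℝ X} (hVstar : IsOutputNulling A B C D Vstar)
    (hVstar₁ : IsMaxOutputNulling A (B.coprod H) C (D.coprod G) Vstar₁)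
    (hV : IsSelfBounded A (B.coprod H) C (D.coprod G) Vstar₁ V)
    (hα : ∀ w, ∃ u, H w + B u ∈ Vstar ∧ G w + D u = 0) :
    LinearMap.range H ≤ LinearMap.range B ⊔ V := by
  rintro _ ⟨w, rfl⟩
  obtain ⟨u, hmem, hker⟩ := hα w
  have hVstar_le : Vstar ≤ Vstar₁ := hVstar₁.2 _ (hVstar.coprod H G)
  have hHBu : H w + B u ∈ V := by
    refine hV.2 ⟨hVstar_le hmem, (u, w), ?_, ?_⟩
    · simpa [add_comm] using hker
    · simp [add_comm]
  have hHw : H w = (H w + B u) - B u := (add_sub_cancel_right _ _).symm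
  rw [hHw]
  exact sub_mem (mem_sup_right hHBu) (mem_sup_left (LinearMap.mem_range_self B u))

end OutputNulling

section InvHull

variable {n : ℕ} {M : Matrix (Fin n) (Fin n) ℝ} {U U' P : Submodule ℝ (Fin n → ℝ)}

theorem invHull_le (hU : U ≤ P) (hP : ∀ x ∈ P, M *ᵥ x ∈ P) : invHull M U ≤ P :=
  sInf_le ⟨hU, hP⟩

theorem le_invHull : U ≤ invHull M U :=
  le_sInf fun _ hW => hW.1

theorem mulVec_mem_invHull {x : Fin n → ℝ} (hx : x ∈ invHull M U) : M *ᵥ x ∈ invHull M U :=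
  mem_sInf.mpr fun _ hW => hW.2 x (mem_sInf.mp hx _ hW)

theorem invHull_mono (h : U ≤ U') : invHull M U ≤ invHull M U' :=
  invHull_le (h.trans le_invHull) fun _ => mulVec_mem_invHull

end InvHull

theorem stmt11_general {n m q r : ℕ}
    (A : Matrix (Fin n) (Fin n) ℝ) (B : Matrix (Fin n) (Fin m) ℝ)
    (H : Matrix (Fin n) (Fin q) ℝ)
    (E : Matrix (Fin r) (Fin n) ℝ) (Dz : Matrix (Fin r) (Fin m) ℝ)
    (Gz : Matrix (Fin r) (Fin q) ℝ)
    (Vstar : Submodule ℝ (Fin n → ℝ))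
    (hVstar : IsMaxOutputNulling A.mulVecLin B.mulVecLin E.mulVecLin Dz.mulVecLin Vstar)
    (Vstar1 : Submodule ℝ (Fin n → ℝ))
    (hVstar1 : IsMaxOutputNulling A.mulVecLin (B.mulVecLin.coprod H.mulVecLin) E.mulVecLin
      (Dz.mulVecLin.coprod Gz.mulVecLin) Vstar1)
    (Vm : Submodule ℝ (Fin n → ℝ))
    (hVm : IsMinSelfBounded A.mulVecLin (B.mulVecLin.coprod H.mulVecLin) E.mulVecLin
      (Dz.mulVecLin.coprod Gz.mulVecLin) Vstar1 Vm)
    (hα : CondAlpha B H Dz Gz Vstar) :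
    invHull A (LinearMap.range B.mulVecLin ⊔ LinearMap.range H.mulVecLin) =
      invHull A (LinearMap.range B.mulVecLin) ⊔ Vm := by
  have hB : LinearMap.range B.mulVecLin ≤ invHull A (LinearMap.range B.mulVecLin) := le_invHull
  have hH : LinearMap.range H.mulVecLin ≤ invHull A (LinearMap.range B.mulVecLin) ⊔ Vm :=
    (range_le_sup_of_isSelfBounded_coprod hVstar.1 hVstar1 hVm.1 hα).trans
      (sup_le_sup_right hB _)
  have hBH : LinearMap.range B.mulVecLin ⊔ LinearMap.range H.mulVecLin ≤
      invHull A (LinearMap.range B.mulVecLin) ⊔ Vm :=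
    sup_le (hB.trans le_sup_left) hH
  refine le_antisymm (invHull_le hBH fun x hx => ?_) (sup_le (invHull_mono le_sup_left) ?_)
  · refine hVm.1.1.apply_mem_sup (fun _ => mulVec_mem_invHull) ?_ hx
    rwa [LinearMap.range_coprod]
  · refine hVm.le_of_invariant (fun _ => mulVec_mem_invHull) ?_
    rw [LinearMap.range_coprod]
    exact le_invHull

theorem stmt11 {n m q p r : ℕ}
    (A : Matrix (Fin n) (Fin n) ℝ) (B : Matrix (Fin n) (Fin m) ℝ)
    (H : Matrix (Fin n) (Fin q) ℝ) (C : Matrix (Fin p) (Fin n) ℝ)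
    (Gy : Matrix (Fin p) (Fin q) ℝ)
    (E : Matrix (Fin r) (Fin n) ℝ) (Dz : Matrix (Fin r) (Fin m) ℝ)
    (Gz : Matrix (Fin r) (Fin q) ℝ)
    (Vstar : Submodule ℝ (Fin n → ℝ))
    (hVstar : IsMaxOutputNulling A.mulVecLin B.mulVecLin E.mulVecLin Dz.mulVecLin Vstar)
    (Sstar : Submodule ℝ (Fin n → ℝ))
    (hSstar : IsMinInputContaining A.mulVecLin H.mulVecLin C.mulVecLin Gy.mulVecLin Sstar)
    (Vstar1 : Submodule ℝ (Fin n → ℝ))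
    (hVstar1 : IsMaxOutputNulling A.mulVecLin (B.mulVecLin.coprod H.mulVecLin) E.mulVecLin
      (Dz.mulVecLin.coprod Gz.mulVecLin) Vstar1)
    (Vm : Submodule ℝ (Fin n → ℝ))
    (hVm : IsMinSelfBounded A.mulVecLin (B.mulVecLin.coprod H.mulVecLin) E.mulVecLin
      (Dz.mulVecLin.coprod Gz.mulVecLin) Vstar1 Vm)
    (hα : CondAlpha B H Dz Gz Vstar)
    (hβ : CondBeta C Gy E Gz Sstar)
    (hSV : Sstar ≤ Vstar) :
    invHull A (LinearMap.range B.mulVecLin ⊔ LinearMap.range H.mulVecLin) =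
      invHull A (LinearMap.range B.mulVecLin) ⊔ Vm :=
  stmt11_general A B H E Dz Gz Vstar hVstar Vstar1 hVstar1 Vm hVm hα
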